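/- arXiv:2010.08611 — 5 statements merged into one kernel-verified Lean document; each statement's English description precedes it below -/
import Mathlib

section
/- If p is a possibly causal path from node A to node Y in a maximally oriented PDAG G, then some subsequence of the nodes of p forms a possibly causal unshielded path from A to Y in G. -/
/-- A partially directed graph: directed edges `dir` and undirected edges `undir`. -/
structure PDAG (V : Type) where
  dir : V → V → Prop
  undir : V → V → Prop
  undir_symm : ∀ a b, undir a b → undir b a

namespace PDAG

variable {V : Type}

/-- Two nodes are adjacent if joined by a directed or undirected edge. -/
def adj (G : PDAG V) (a b : V) : Prop := G.dir a b ∨ G.dir b a ∨ G.undir a b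

/-- Each pair of nodes is joined by at most one edge, and no self loops. -/
def Wellformed (G : PDAG V) : Prop :=
  (∀ a b, ¬ (G.dir a b ∧ G.dir b a)) ∧ (∀ a b, ¬ (G.dir a b ∧ G.undir a b)) ∧
  (∀ a, ¬ G.undir a a)

/-- No directed cycles. -/
def Acyclic (G : PDAG V) : Prop := ∀ a, ¬ Relation.TransGen G.dir a a

/-- Closure under Meek's orientation rules R1–R4. -/
def MeekClosed (G : PDAG V) : Prop :=
  (∀ a b c, G.dir a b → G.undir b c → ¬ G.adj a c → G.dir b c) ∧
  (∀ a b c, G.dir a c → G.dir c b → G.undir a b → G.dir a b) ∧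
  (∀ a b c d, G.undir a b → G.undir a c → G.undir a d → G.dir c b → G.dir d b →
    ¬ G.adj c d → G.dir a b) ∧
  (∀ a b c d, G.undir d a → G.undir d b → G.undir d c → G.dir a b → G.dir b c →
    ¬ G.adj a c → G.dir d c)

/-- A maximally oriented PDAG. -/
def IsMPDAG (G : PDAG V) : Prop := G.Wellformed ∧ G.Acyclic ∧ G.MeekClosed

/-- A DAG: acyclic, no undirected edges. -/
def IsDAG (G : PDAG V) : Prop := G.Wellformed ∧ G.Acyclic ∧ ∀ a b, ¬ G.undir a b

/-- A path: at least two distinct nodes, consecutive ones adjacent. -/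
def IsPath (G : PDAG V) (p : List V) : Prop :=
  2 ≤ p.length ∧ p.Nodup ∧ List.Chain' G.adj p

/-- Possibly causal path: no edge `Vi ← Vj` in `G` for `i < j` among the path's nodes. -/
def PossiblyCausal (G : PDAG V) (p : List V) : Prop :=
  p.Pairwise (fun a b => ¬ G.dir b a)

/-- Causal path: every consecutive edge directed forwards. -/
def Causal (G : PDAG V) (p : List V) : Prop := List.Chain' G.dir p

/-- Unshielded path: endpoints of every consecutive triple are nonadjacent. -/
def Unshielded (G : PDAG V) (p : List V) : Prop :=
  ∀ a b c, [a, b, c] <:+: p → ¬ G.adj a c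

/-- Proper path w.r.t. `A`: only the first node is in `A`. -/
def ProperFrom (A : Set V) (p : List V) : Prop :=
  ∃ a t, p = a :: t ∧ a ∈ A ∧ ∀ x ∈ t, x ∉ A

/-- The path ends in the set `Y`. -/
def EndsIn (p : List V) (Y : Set V) : Prop := ∃ y, p.getLast? = some y ∧ y ∈ Y

/-- The path starts with an undirected edge. -/
def StartsUndir (G : PDAG V) (p : List V) : Prop :=
  ∃ a b t, p = a :: b :: t ∧ G.undir a b

/-- The path starts with a directed edge. -/
def StartsDir (G : PDAG V) (p : List V) : Prop :=
  ∃ a b t, p = a :: b :: t ∧ G.dir a b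

/-- A proper possibly causal path from `A` to `Y`. -/
def PPCPath (G : PDAG V) (A Y : Set V) (p : List V) : Prop :=
  G.IsPath p ∧ G.PossiblyCausal p ∧ ProperFrom A p ∧ EndsIn p Y

/-- Perković's identifiability condition: every proper possibly causal path from `A`
to `Y` starts with a directed edge. -/
def IdCond (G : PDAG V) (A Y : Set V) : Prop :=
  ∀ p, G.PPCPath A Y p → G.StartsDir p

/-- A violating path: proper possibly causal from `A` to `Y` starting with an
undirected edge. -/
def ViolPath (G : PDAG V) (A Y : Set V) (p : List V) : Prop :=
  G.PPCPath A Y p ∧ G.StartsUndir p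

/-- A shortest violating path. -/
def ShortestViol (G : PDAG V) (A Y : Set V) (p : List V) : Prop :=
  G.ViolPath A Y p ∧ ∀ q, G.ViolPath A Y q → p.length ≤ q.length

/-- Same adjacencies. -/
def SameAdj (G' G : PDAG V) : Prop := ∀ a b, G'.adj a b ↔ G.adj a b

/-- Same unshielded colliders. -/
def SameUC (G' G : PDAG V) : Prop :=
  ∀ a b c, (G'.dir a b ∧ G'.dir c b ∧ ¬ G'.adj a c) ↔
    (G.dir a b ∧ G.dir c b ∧ ¬ G.adj a c)

/-- `G'` is represented by `G`: same adjacencies, same unshielded colliders, and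
every directed edge of `G` appears in `G'`. -/
def RepresentedBy (G' G : PDAG V) : Prop :=
  SameAdj G' G ∧ SameUC G' G ∧ ∀ a b, G.dir a b → G'.dir a b

/-- `G1 = MPDAG(G, {A1 → V1})`: the least maximally oriented graph represented by `G`
containing the orientation `A1 → V1`. -/
def IsOrientClosure (G : PDAG V) (A1 V1 : V) (G1 : PDAG V) : Prop :=
  G1.IsMPDAG ∧ RepresentedBy G1 G ∧ G1.dir A1 V1 ∧
  (∀ a b, G1.undir a b ↔ (G.adj a b ∧ ¬ G1.dir a b ∧ ¬ G1.dir b a)) ∧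
  (∀ H : PDAG V, H.IsMPDAG → RepresentedBy H G → H.dir A1 V1 →
    ∀ a b, G1.dir a b → H.dir a b)

end PDAG

/-! Bypassing the middle node `b` of a shielded triple `⟨a, b, c⟩` keeps a path, since `a` and `c`
are adjacent; possible causality is a condition on all ordered pairs of nodes, so it passes to
every subsequence. Repeating this strictly shortens the path, so it ends at an unshielded one with
the same endpoints. -/

theorem List.IsChain.bypass {α : Type*} {R : α → α → Prop} {s t : List α} {a b c : α}
    (h : (s ++ a :: b :: c :: t).IsChain R) (hac : R a c) : (s ++ a :: c :: t).IsChain R := by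
  simp only [List.isChain_append_cons_cons, List.isChain_cons_cons] at h ⊢
  exact ⟨h.1, hac, h.2.2.2⟩

namespace PDAG

variable {V : Type} {G : PDAG V}

theorem IsPath.bypass {s t : List V} {a b c : V} (hp : G.IsPath (s ++ a :: b :: c :: t))
    (hac : G.adj a c) : G.IsPath (s ++ a :: c :: t) := by
  obtain ⟨-, hnodup, hchain⟩ := hp
  exact ⟨by simp; omega, hnodup.sublist (by simp), hchain.bypass hac⟩

theorem exists_eq_append_of_not_unshielded {p : List V} (h : ¬ G.Unshielded p) :
    ∃ s a b c t, p = s ++ a :: b :: c :: t ∧ G.adj a c := by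
  simp only [Unshielded, not_forall, not_not] at h
  obtain ⟨a, b, c, ⟨s, t, rfl⟩, hac⟩ := h
  exact ⟨s, a, b, c, t, by simp, hac⟩

theorem exists_unshielded_sublist {p : List V} (hp : G.IsPath p) (hpc : G.PossiblyCausal p) :
    ∃ q : List V, q.Sublist p ∧ G.IsPath q ∧ G.PossiblyCausal q ∧ G.Unshielded q ∧
      q.head? = p.head? ∧ q.getLast? = p.getLast? := by
  by_cases hu : G.Unshielded p
  · exact ⟨p, List.Sublist.refl p, hp, hpc, hu, rfl, rfl⟩
  obtain ⟨s, a, b, c, t, rfl, hac⟩ := exists_eq_append_of_not_unshielded hu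
  have hsub : (s ++ a :: c :: t).Sublist (s ++ a :: b :: c :: t) := by simp
  have : (s ++ a :: c :: t).length < (s ++ a :: b :: c :: t).length := by simp
  obtain ⟨q, hqsub, hq, hqpc, hqu, hhead, hlast⟩ :=
    exists_unshielded_sublist (hp.bypass hac) (List.Pairwise.sublist hsub hpc)
  refine ⟨q, hqsub.trans hsub, hq, hqpc, hqu, ?_, ?_⟩
  · rw [hhead]
    cases s <;> rfl
  · rw [hlast, List.getLast?_append_cons, List.getLast?_append_cons]
    simp
termination_by p.length

end PDAG

theorem stmt0_general {V : Type} (G : PDAG V) (p : List V) (A Y : V)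
    (hp : G.IsPath p) (hpc : G.PossiblyCausal p)
    (hA : p.head? = some A) (hY : p.getLast? = some Y) :
    ∃ q : List V, q.Sublist p ∧ G.IsPath q ∧ G.PossiblyCausal q ∧ G.Unshielded q ∧
      q.head? = some A ∧ q.getLast? = some Y := by
  obtain ⟨q, hsub, hq, hqpc, hqu, hhead, hlast⟩ := PDAG.exists_unshielded_sublist hp hpc
  exact ⟨q, hsub, hq, hqpc, hqu, hhead.trans hA, hlast.trans hY⟩

/-- If `p` is a possibly causal path from `A` to `Y` in an MPDAG `G`, then some
subsequence of `p` forms a possibly causal unshielded path from `A` to `Y` in `G`. -/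
theorem stmt0 {V : Type} (G : PDAG V) (hG : G.IsMPDAG) (p : List V) (A Y : V)
    (hp : G.IsPath p) (hpc : G.PossiblyCausal p)
    (hA : p.head? = some A) (hY : p.getLast? = some Y) :
    ∃ q : List V, q.Sublist p ∧ G.IsPath q ∧ G.PossiblyCausal q ∧ G.Unshielded q ∧
      q.head? = some A ∧ q.getLast? = some Y :=
  stmt0_general G p A Y hp hpc hA hY
end

section
/- Let p = <V0, V1, ..., Vk> be an unshielded possibly causal path in an MPDAG G whose first edge is directed V0 -> V1. Then p is a causal (fully directed) path V0 -> V1 -> ... -> Vk in G. -/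
namespace PDAG

variable {V : Type} {G : PDAG V}

theorem dir_of_adj_of_dir (hG : G.MeekClosed) {a b c : V} (hab : G.dir a b) (hbc : G.adj b c)
    (hcb : ¬ G.dir c b) (hac : ¬ G.adj a c) : G.dir b c := by
  rcases hbc with h | h | h
  · exact h
  · exact absurd h hcb
  · exact hG.1 a b c hab h hac

theorem Unshielded.of_cons {a : V} {l : List V} (h : G.Unshielded (a :: l)) :
    G.Unshielded l :=
  fun x y z hxyz => h x y z (hxyz.trans (List.suffix_cons a l).isInfix)

theorem causal_of_unshielded (hG : G.MeekClosed) :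
    ∀ {a b : V} {t : List V}, G.dir a b → (a :: b :: t).IsChain G.adj →
      G.PossiblyCausal (a :: b :: t) → G.Unshielded (a :: b :: t) →
      G.Causal (a :: b :: t)
  | _, _, [], hab, _, _, _ => List.isChain_pair.mpr hab
  | a, b, c :: t, hab, hadj, hpc, hun => by
    obtain ⟨-, hadj'⟩ := List.isChain_cons_cons.mp hadj
    have hcb : ¬ G.dir c b := (List.pairwise_cons.mp hpc.of_cons).1 c List.mem_cons_self
    have hbc : G.dir b c :=
      dir_of_adj_of_dir hG hab (List.isChain_cons_cons.mp hadj').1 hcb (hun a b c ⟨[], t, rfl⟩)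
    exact List.isChain_cons_cons.mpr
      ⟨hab, causal_of_unshielded hG hbc hadj' hpc.of_cons hun.of_cons⟩

end PDAG

/-- An unshielded possibly causal path in an MPDAG whose first edge is directed
`V0 → V1` is a fully directed (causal) path. -/
theorem stmt4 {V : Type} (G : PDAG V) (hG : G.IsMPDAG) (p : List V)
    (V0 V1 : V) (t : List V) (hpe : p = V0 :: V1 :: t)
    (hp : G.IsPath p) (hpc : G.PossiblyCausal p) (hun : G.Unshielded p)
    (hd : G.dir V0 V1) : G.Causal p := by
  subst hpe
  exact PDAG.causal_of_unshielded hG.2.2 hd hp.2.2 hpc hun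
end

section
/- Let G be an MPDAG and let p = <A1, V1, ..., Yk> be a shortest (minimum number of edges) proper possibly causal path from a node set A to a node set Y that starts with an undirected edge A1 - V1. Then the subpath p(V1, Yk) from V1 to the endpoint is an unshielded path in G. -/
/-! If consecutive nodes `a, b, c` of `p(V₁, Yₖ)` had `a` adjacent to `c`, skipping `b` would
give a shorter violating path: being a path, possibly causal and proper all pass to the
shortcut, and the first edge `A₁ - V₁` and the endpoint are untouched. -/

theorem List.IsChain.shortcut {α : Type*} {R : α → α → Prop} {s t : List α} {a b c : α}
    (h : List.IsChain R (s ++ a :: b :: c :: t)) (hac : R a c) :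
    List.IsChain R (s ++ a :: c :: t) := by
  rw [List.isChain_append] at h ⊢
  obtain ⟨hs, habct, hjoin⟩ := h
  exact ⟨hs, List.isChain_cons_cons.mpr ⟨hac, habct.tail.tail⟩, by simpa using hjoin⟩

namespace PDAG

variable {V : Type} {G : PDAG V} {A Y : Set V}

theorem ProperFrom.sublist_tail {u : V} {l l' : List V} (h : ProperFrom A (u :: l))
    (hl : l'.Sublist l) : ProperFrom A (u :: l') := by
  obtain ⟨_, _, ⟨rfl, rfl⟩, hu, hl_A⟩ := h
  exact ⟨u, l', rfl, hu, fun x hx => hl_A x (hl.subset hx)⟩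

theorem endsIn_append_cons {l t : List V} {c : V} :
    EndsIn (l ++ c :: t) Y ↔ EndsIn (c :: t) Y := by
  simp only [EndsIn, List.getLast?_append_cons]

theorem endsIn_cons_cons {a b : V} {t : List V} :
    EndsIn (a :: b :: t) Y ↔ EndsIn (b :: t) Y := by
  simp only [EndsIn, List.getLast?_cons_cons]

theorem startsUndir_cons_cons {u v : V} {l : List V} :
    G.StartsUndir (u :: v :: l) ↔ G.undir u v := by
  simp [StartsUndir]

theorem ViolPath.shortcut {u a b c : V} {s t : List V}
    (hp : G.ViolPath A Y (u :: (s ++ a :: b :: c :: t))) (hac : G.adj a c) :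
    G.ViolPath A Y (u :: (s ++ a :: c :: t)) := by
  obtain ⟨⟨⟨-, hnodup, hchain⟩, hpc, hproper, hends⟩, hstart⟩ := hp
  have hsub : (s ++ a :: c :: t).Sublist (s ++ a :: b :: c :: t) :=
    (List.Sublist.cons_cons a (List.Sublist.cons b (List.Sublist.refl _))).append_left s
  refine ⟨⟨⟨?_, hnodup.sublist (hsub.cons_cons u), hchain.shortcut (s := u :: s) hac⟩,
    hpc.sublist (hsub.cons_cons u), hproper.sublist_tail hsub, ?_⟩, ?_⟩
  · simp only [List.length_cons, List.length_append]; omega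
  · simpa only [← List.cons_append, endsIn_append_cons, endsIn_cons_cons] using hends
  · rcases s with _ | ⟨v, s⟩ <;> simpa [startsUndir_cons_cons] using hstart

end PDAG

theorem stmt5_general {V : Type} (G : PDAG V) (A Y : Set V)
    (p : List V) (hshort : G.ShortestViol A Y p) :
    G.Unshielded p.tail := by
  obtain ⟨hviol, hmin⟩ := hshort
  rcases p with _ | ⟨u, p⟩
  · exact absurd hviol.1.1.1 (by simp)
  rintro a b c ⟨s, t, rfl⟩ hac
  simp only [List.append_assoc, List.cons_append, List.nil_append] at hviol hmin
  have := hmin _ (hviol.shortcut hac)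
  simp at this

/-- If `p` is a shortest proper possibly causal path from `A` to `Y` starting with an
undirected edge in an MPDAG `G`, then the subpath of `p` from its second node to its
endpoint is unshielded. -/
theorem stmt5 {V : Type} (G : PDAG V) (hG : G.IsMPDAG) (A Y : Set V)
    (hAY : Disjoint A Y) (p : List V) (hshort : G.ShortestViol A Y p) :
    G.Unshielded p.tail :=
  stmt5_general G A Y p hshort
end

section
/- Let G be an MPDAG in which the total effect of A on Y is not identified, and let p = <A1, V1, ..., Y1> be a shortest proper possibly causal path from A to Y starting with the undirected edge A1 - V1. Then in any MPDAG G* represented by G that still contains the undirected edge A1 - V1, the path corresponding to p remains a proper possibly causal path from A to Y starting with an undirected edge; hence the total effect of A on Y is not identified in G*. -/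
/-! By minimality, the only chords of a shortest violating path `p = ⟨A1, V1, …⟩` of `G` are
directed edges `A1 → Vj`: any other chord `Vi ~ Vj` would shortcut `p` to a shorter violating
path (it still starts with `A1 - V1`, or with the undirected chord itself). Since the directed
edges of `G*` contain those of `G`, no chord of `p` points backwards in `G*`. For the edges of
`p` one argues by induction along `p`, starting from the undirected edge `A1 - V1`: if
`V(i+1) ← V(i+2)` in `G*`, then `Vi` and `V(i+2)` are nonadjacent (a chord `A1 → V2` would
orient `A1 → V1` by rule R2), so `Vi → V(i+1)` would create an unshielded collider absent from
`G`, and `Vi - V(i+1)` would be oriented `V(i+1) → Vi` by rule R1, against the induction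
hypothesis. -/

namespace PDAG

variable {V : Type}

theorem adj_comm (G : PDAG V) {a b : V} : G.adj a b ↔ G.adj b a := by
  have flip : ∀ {x y}, G.adj x y → G.adj y x := by
    rintro x y (h | h | h)
    exacts [Or.inr (Or.inl h), Or.inl h, Or.inr (Or.inr (G.undir_symm _ _ h))]
  exact ⟨flip, flip⟩

theorem Wellformed.not_dir_of_undir {G : PDAG V} (hG : G.Wellformed) {a b : V}
    (h : G.undir a b) : ¬ G.dir a b :=
  fun hd => hG.2.1 a b ⟨hd, h⟩

theorem PossiblyCausal.not_dir_getElem {G : PDAG V} {p : List V} (hp : G.PossiblyCausal p)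
    {i j : ℕ} (hij : i < j) (hj : j < p.length) : ¬ G.dir p[j] p[i] :=
  List.pairwise_iff_getElem.1 hp i j (by omega) hj hij

theorem IsPath.adj_getElem {G : PDAG V} {p : List V} (hp : G.IsPath p) {i : ℕ}
    (hi : i + 1 < p.length) : G.adj p[i] p[i + 1] :=
  List.isChain_iff_getElem.1 hp.2.2 i hi

theorem startsUndir_iff_getElem {G : PDAG V} {p : List V} :
    G.StartsUndir p ↔ ∃ h : 1 < p.length, G.undir p[0] p[1] := by
  constructor
  · rintro ⟨a, b, t, rfl, hab⟩
    exact ⟨by simp, hab⟩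
  · rintro ⟨h, hu⟩
    match p, h with
    | a :: b :: t, _ => exact ⟨a, b, t, rfl, hu⟩

theorem ProperFrom.of_sublist {A : Set V} {p q : List V} (hp : ProperFrom A p)
    (hqp : q.Sublist p) (hhead : q.head? = p.head?) : ProperFrom A q := by
  obtain ⟨a, t, rfl, ha, ht⟩ := hp
  obtain ⟨t', rfl⟩ := List.head?_eq_some_iff.1 hhead
  exact ⟨a, t', rfl, ha, fun x hx => ht x ((List.cons_sublist_cons.1 hqp).subset hx)⟩

theorem ViolPath.not_idCond {G : PDAG V} {A Y : Set V} {p : List V} (hG : G.Wellformed)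
    (hp : G.ViolPath A Y p) : ¬ G.IdCond A Y := by
  intro hid
  obtain ⟨a, b, t, rfl, hab⟩ := hp.2
  obtain ⟨_, _, _, he, hdir⟩ := hid _ hp.1
  simp only [List.cons.injEq] at he
  obtain ⟨rfl, rfl, -⟩ := he
  exact hG.not_dir_of_undir hab hdir

theorem RepresentedBy.isPath {G' G : PDAG V} {p : List V} (hrep : RepresentedBy G' G)
    (hp : G.IsPath p) : G'.IsPath p :=
  ⟨hp.1, hp.2.1, hp.2.2.imp fun a b => (hrep.1 a b).2⟩

end PDAG

theorem List.take_append_drop_sublist {α : Type*} (l : List α) {i j : ℕ} (h : i ≤ j) :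
    (l.take i ++ l.drop j).Sublist l := by
  conv_rhs => rw [← l.take_append_drop i]
  exact (List.Sublist.refl _).append (l.drop_sublist_drop_left h)

theorem List.getElem_take_append_drop_of_lt {α : Type*} (l : List α) {i j k : ℕ}
    (hk : k < i) (hi : i ≤ l.length) (h : k < (l.take i ++ l.drop j).length) :
    (l.take i ++ l.drop j)[k] = l[k] := by
  rw [List.getElem_append_left (by simp; omega), List.getElem_take]

theorem List.getElem_take_append_drop_self {α : Type*} (l : List α) {i j : ℕ}
    (hj : j < l.length) (hi : i ≤ l.length) (h : i < (l.take i ++ l.drop j).length) :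
    (l.take i ++ l.drop j)[i] = l[j] := by
  rw [List.getElem_append_right (by simp), List.getElem_drop]
  congr 1
  simp [hi]

namespace PDAG

variable {V : Type} {G : PDAG V} {A Y : Set V} {p : List V}

theorem ViolPath.shortcut_s6 (hp : G.ViolPath A Y p) {i j : ℕ} (hij : i + 1 < j)
    (hj : j < p.length) (hadj : G.adj p[i] p[j]) (hstart : 0 < i ∨ G.undir p[i] p[j]) :
    G.ViolPath A Y (p.take (i + 1) ++ p.drop j) := by
  obtain ⟨⟨⟨-, hnodup, hchain⟩, hpc, hprop, hend⟩, hsu⟩ := hp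
  have hsub := p.take_append_drop_sublist (show i + 1 ≤ j by omega)
  have hne : p ≠ [] := List.ne_nil_of_length_pos (by omega)
  have hhead : (p.take (i + 1) ++ p.drop j).head? = p.head? := by
    rw [List.head?_append, List.head?_take, if_neg (by omega), List.head?_eq_some_head hne]
    rfl
  have hlast : (p.take (i + 1) ++ p.drop j).getLast? = p.getLast? := by
    rw [List.getLast?_append, List.getLast?_drop, if_neg (by omega),
      List.getLast?_eq_some_getLast hne]
    rfl
  refine ⟨⟨⟨?_, hsub.nodup hnodup, ?_⟩, hpc.sublist hsub, hprop.of_sublist hsub hhead,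
    ?_⟩, ?_⟩
  · simp; omega
  · refine List.isChain_append.2 ⟨hchain.take _, hchain.drop _, ?_⟩
    intro x hx y hy
    simp [List.getLast?_take, List.getElem?_eq_getElem (show i < p.length by omega),
      List.getElem?_eq_getElem hj] at hx hy
    rwa [← hx, ← hy]
  · unfold EndsIn; rwa [hlast]
  · obtain ⟨h1, hu⟩ := startsUndir_iff_getElem.1 hsu
    refine startsUndir_iff_getElem.2 ⟨by simp; omega, ?_⟩
    rw [p.getElem_take_append_drop_of_lt (by omega) (by omega)]
    rcases Nat.eq_zero_or_pos i with rfl | hi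
    · rw [p.getElem_take_append_drop_self hj (by omega)]
      exact hstart.resolve_left (lt_irrefl 0)
    · rwa [p.getElem_take_append_drop_of_lt (by omega) (by omega)]

theorem ShortestViol.eq_zero_and_dir_of_adj (hp : G.ShortestViol A Y p) {i j : ℕ}
    (hij : i + 1 < j) (hj : j < p.length) (hadj : G.adj p[i] p[j]) :
    i = 0 ∧ G.dir p[i] p[j] := by
  have hlong : ¬ (0 < i ∨ G.undir p[i] p[j]) := fun hstart => by
    have := hp.2 _ (hp.1.shortcut_s6 hij hj hadj hstart)
    simp at this
    omega
  obtain ⟨hi, hnu⟩ := not_or.1 hlong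
  refine ⟨by omega, ?_⟩
  rcases hadj with hfwd | hback | hund
  · exact hfwd
  · exact absurd hback (hp.1.1.2.1.not_dir_getElem (by omega) hj)
  · exact absurd hund hnu

variable {G' : PDAG V}

theorem ShortestViol.not_adj_getElem_of_dir (hwf : G'.Wellformed) (hmeek : G'.MeekClosed)
    (hrep : RepresentedBy G' G) (hp : G.ShortestViol A Y p) (hu : G'.StartsUndir p) {i : ℕ}
    (h : i + 2 < p.length) (hd : G'.dir p[i + 2] p[i + 1]) : ¬ G'.adj p[i] p[i + 2] := by
  intro hadj
  obtain ⟨rfl, hdir⟩ := hp.eq_zero_and_dir_of_adj (by omega) h ((hrep.1 _ _).1 hadj)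
  obtain ⟨_, hu01⟩ := startsUndir_iff_getElem.1 hu
  -- Meek's rule R2 on `p[0] → p[2] → p[1]` would orient the edge `p[0] - p[1]`.
  exact hwf.not_dir_of_undir hu01 (hmeek.2.1 _ _ _ (hrep.2.2 _ _ hdir) hd hu01)

theorem ShortestViol.not_dir_succ (hwf : G'.Wellformed) (hmeek : G'.MeekClosed)
    (hrep : RepresentedBy G' G) (hp : G.ShortestViol A Y p) (hu : G'.StartsUndir p) {i : ℕ}
    (h : i + 1 < p.length) : ¬ G'.dir p[i + 1] p[i] := by
  induction i with
  | zero =>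
    obtain ⟨_, hu01⟩ := startsUndir_iff_getElem.1 hu
    exact hwf.not_dir_of_undir (G'.undir_symm _ _ hu01)
  | succ i ih =>
    intro hd
    have hna := hp.not_adj_getElem_of_dir hwf hmeek hrep hu h hd
    have hpc : G.PossiblyCausal p := hp.1.1.2.1
    rcases (hrep.1 _ _).2 (hp.1.1.1.adj_getElem (i := i) (by omega)) with hfwd | hback | hund
    · -- `p[i] → p[i+1] ← p[i+2]` would be an unshielded collider of `G'`, hence of `G`.
      exact hpc.not_dir_getElem (by omega) h ((hrep.2.1 _ _ _).1 ⟨hfwd, hd, hna⟩).2.1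
    · exact ih (by omega) hback
    · -- Meek's rule R1 orients `p[i+1] - p[i]` away from `p[i+2]`.
      exact ih (by omega) (hmeek.1 _ _ _ hd (G'.undir_symm _ _ hund) (by rwa [adj_comm]))

theorem ShortestViol.possiblyCausal (hwf : G'.Wellformed) (hmeek : G'.MeekClosed)
    (hrep : RepresentedBy G' G) (hp : G.ShortestViol A Y p) (hu : G'.StartsUndir p) :
    G'.PossiblyCausal p := by
  refine List.pairwise_iff_getElem.2 fun i j _ hj hij hd => ?_
  rcases Nat.lt_or_ge (i + 1) j with hlt | hle
  · have hadj : G.adj p[i] p[j] := (hrep.1 _ _).1 (Or.inr (Or.inl hd))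
    obtain ⟨rfl, hdir⟩ := hp.eq_zero_and_dir_of_adj hlt hj hadj
    exact hwf.1 _ _ ⟨hrep.2.2 _ _ hdir, hd⟩
  · obtain rfl : j = i + 1 := by omega
    exact hp.not_dir_succ hwf hmeek hrep hu hj hd

theorem ShortestViol.violPath (hwf : G'.Wellformed) (hmeek : G'.MeekClosed)
    (hrep : RepresentedBy G' G) (hp : G.ShortestViol A Y p) (hu : G'.StartsUndir p) :
    G'.ViolPath A Y p :=
  ⟨⟨hrep.isPath hp.1.1.1, hp.possiblyCausal hwf hmeek hrep hu, hp.1.1.2.2⟩, hu⟩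

end PDAG

theorem stmt6_general {V : Type} (G Gstar : PDAG V) (hGs : Gstar.IsMPDAG)
    (hrep : PDAG.RepresentedBy Gstar G) (A Y : Set V) (p : List V) (A1 V1 : V) (t : List V)
    (hpe : p = A1 :: V1 :: t) (hshort : G.ShortestViol A Y p)
    (hu : Gstar.undir A1 V1) :
    Gstar.ViolPath A Y p ∧ ¬ Gstar.IdCond A Y := by
  have hviol : Gstar.ViolPath A Y p := hshort.violPath hGs.1 hGs.2.2 hrep ⟨A1, V1, t, hpe, hu⟩
  exact ⟨hviol, hviol.not_idCond hGs.1⟩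

/-- If the total effect of `A` on `Y` is not identified in MPDAG `G` and
`p = ⟨A1, V1, …, Y1⟩` is a shortest proper possibly causal path from `A` to `Y`
starting with the undirected edge `A1 - V1`, then in any MPDAG `G*` represented
by `G` that still contains the undirected edge `A1 - V1`, the path `p` is still a
proper possibly causal path from `A` to `Y` starting with an undirected edge;
hence the effect is not identified in `G*` either. -/
theorem stmt6 {V : Type} (G Gstar : PDAG V) (hG : G.IsMPDAG) (hGs : Gstar.IsMPDAG)
    (hrep : PDAG.RepresentedBy Gstar G) (A Y : Set V) (hAY : Disjoint A Y)
    (hnid : ¬ G.IdCond A Y) (p : List V) (A1 V1 : V) (t : List V)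
    (hpe : p = A1 :: V1 :: t) (hshort : G.ShortestViol A Y p)
    (hu : Gstar.undir A1 V1) :
    Gstar.ViolPath A Y p ∧ ¬ Gstar.IdCond A Y :=
  stmt6_general G Gstar hGs hrep A Y p A1 V1 t hpe hshort hu
end

section
/- Partition property of IDGraphs: every DAG represented by the input MPDAG G is represented by exactly one MPDAG in the output of IDGraphs(A, Y, G). -/
open PDAG in
/-- `IDRel A Y G L d`: running `IDGraphs(A, Y, G)` can output the list `L` of graphs
with recursion depth `d`. -/
inductive IDRel {V : Type} (A Y : Set V) : PDAG V → List (PDAG V) → ℕ → Prop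
  | base (G : PDAG V) : IdCond G A Y → IDRel A Y G [G] 0
  | step (G G1 G2 : PDAG V) (A1 V1 : V) (p t : List V)
      (L1 L2 : List (PDAG V)) (d1 d2 : ℕ) :
      ¬ IdCond G A Y →
      p = A1 :: V1 :: t →
      ShortestViol G A Y p →
      IsOrientClosure G A1 V1 G1 →
      IsOrientClosure G V1 A1 G2 →
      IDRel A Y G1 L1 d1 →
      IDRel A Y G2 L2 d2 →
      IDRel A Y G (L1 ++ L2) (max d1 d2 + 1)

/-- The number of undirected edges of `G` (ordered pairs). -/
noncomputable def undirCount {V : Type} (G : PDAG V) : ℕ :=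
  Nat.card {e : V × V // G.undir e.1 e.2}

namespace PDAG

theorem rep_refl {V : Type} (G : PDAG V) : RepresentedBy G G :=
  ⟨fun _ _ => Iff.rfl, fun _ _ _ => Iff.rfl, fun _ _ h => h⟩

theorem rep_trans {V : Type} {D H G : PDAG V}
    (h1 : RepresentedBy D H) (h2 : RepresentedBy H G) : RepresentedBy D G :=
  ⟨fun a b => (h1.1 a b).trans (h2.1 a b),
   fun a b c => ((h1.2.1 a b c).trans (h2.2.1 a b c)),
   fun a b h => h1.2.2 a b (h2.2.2 a b h)⟩

theorem dag_mpdag {V : Type} {D : PDAG V} (hD : D.IsDAG) : D.IsMPDAG :=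
  ⟨hD.1, hD.2.1,
    fun _ b c _ h _ => absurd h (hD.2.2 b c),
    fun a b _ _ _ h => absurd h (hD.2.2 a b),
    fun a b _ _ h _ _ _ _ _ => absurd h (hD.2.2 a b),
    fun _ _ _ d h _ _ _ _ _ => absurd h (hD.2.2 d _)⟩

end PDAG

open PDAG in
theorem IDRel.mem_rep {V : Type} {A Y : Set V} {G : PDAG V} {L : List (PDAG V)} {d : ℕ}
    (h : IDRel A Y G L d) : ∀ H ∈ L, RepresentedBy H G := by
  induction h with
  | base G _ =>
    intro H hH
    simp only [List.mem_singleton] at hH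
    subst hH; exact rep_refl _
  | step G G1 G2 A1 V1 p t L1 L2 d1 d2 _ _ _ hc1 hc2 _ _ ih1 ih2 =>
    intro H hH
    rcases List.mem_append.mp hH with hH | hH
    · exact rep_trans (ih1 H hH) hc1.2.1
    · exact rep_trans (ih2 H hH) hc2.2.1

open PDAG in
theorem IDRel.partition {V : Type} {A Y : Set V} {G : PDAG V} {L : List (PDAG V)} {d : ℕ}
    (h : IDRel A Y G L d) (D : PDAG V) (hD : D.IsDAG) (hrep : RepresentedBy D G) :
    ∃! H : PDAG V, H ∈ L ∧ RepresentedBy D H := by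
  induction h with
  | base G _ =>
    exact ⟨G, ⟨List.mem_singleton_self G, hrep⟩,
      fun y hy => List.mem_singleton.mp hy.1⟩
  | step G G1 G2 A1 V1 p t L1 L2 d1 d2 _ hp hsv hc1 hc2 h1 h2 ih1 ih2 =>
    -- G.undir A1 V1
    obtain ⟨a, b, t', hpe, hund⟩ := hsv.1.2
    rw [hp] at hpe
    have hund' : G.undir A1 V1 := by
      injection hpe with e1 e2; injection e2 with e3 _
      rw [e1, e3]; exact hund
    have hadjG : G.adj A1 V1 := Or.inr (Or.inr hund')
    have hadjD : D.adj A1 V1 := (hrep.1 A1 V1).mpr hadjG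
    have hDm : D.IsMPDAG := dag_mpdag hD
    have hdir : D.dir A1 V1 ∨ D.dir V1 A1 := by
      rcases hadjD with h | h | h
      · exact Or.inl h
      · exact Or.inr h
      · exact absurd h (hD.2.2 A1 V1)
    -- key: rep by G1 side forces D.dir A1 V1; rep by G2 side forces D.dir V1 A1
    have key1 : ∀ H ∈ L1, RepresentedBy D H → D.dir A1 V1 := fun H hH hDH =>
      (rep_trans hDH (h1.mem_rep H hH)).2.2 A1 V1 hc1.2.2.1
    have key2 : ∀ H ∈ L2, RepresentedBy D H → D.dir V1 A1 := fun H hH hDH =>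
      (rep_trans hDH (h2.mem_rep H hH)).2.2 V1 A1 hc2.2.2.1
    rcases hdir with hd | hd
    · -- D represented by G1
      have hrep1 : RepresentedBy D G1 :=
        ⟨fun a b => (hrep.1 a b).trans (hc1.2.1.1 a b).symm,
         fun a b c => (hrep.2.1 a b c).trans (hc1.2.1.2.1 a b c).symm,
         fun a b hab => hc1.2.2.2.2 D hDm hrep hd a b hab⟩
      obtain ⟨H, ⟨hHL, hHrep⟩, huniq⟩ := ih1 hrep1
      refine ⟨H, ⟨List.mem_append.mpr (Or.inl hHL), hHrep⟩, ?_⟩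
      rintro y ⟨hy, hyrep⟩
      rcases List.mem_append.mp hy with hy | hy
      · exact huniq y ⟨hy, hyrep⟩
      · exact absurd ⟨hd, key2 y hy hyrep⟩ (hD.1.1 A1 V1)
    · -- D represented by G2
      have hrep2 : RepresentedBy D G2 :=
        ⟨fun a b => (hrep.1 a b).trans (hc2.2.1.1 a b).symm,
         fun a b c => (hrep.2.1 a b c).trans (hc2.2.1.2.1 a b c).symm,
         fun a b hab => hc2.2.2.2.2 D hDm hrep hd a b hab⟩
      obtain ⟨H, ⟨hHL, hHrep⟩, huniq⟩ := ih2 hrep2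
      refine ⟨H, ⟨List.mem_append.mpr (Or.inr hHL), hHrep⟩, ?_⟩
      rintro y ⟨hy, hyrep⟩
      rcases List.mem_append.mp hy with hy | hy
      · exact absurd ⟨key1 y hy hyrep, hd⟩ (hD.1.1 A1 V1)
      · exact huniq y ⟨hy, hyrep⟩

/-- Partition property of `IDGraphs`: every DAG represented by the input MPDAG `G`
is represented by exactly one MPDAG in the output of `IDGraphs(A, Y, G)`. -/
theorem stmt15 {V : Type} (G : PDAG V) (hG : G.IsMPDAG) (A Y : Set V)
    (L : List (PDAG V)) (d : ℕ) (h : IDRel A Y G L d)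
    (D : PDAG V) (hD : D.IsDAG) (hrep : PDAG.RepresentedBy D G) :
    ∃! H : PDAG V, H ∈ L ∧ PDAG.RepresentedBy D H :=
  h.partition D hD hrep
end
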